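/- Let B be an m×m matrix with |e^{Bt}y| ≤ K e^{-βt}|y| for t ≥ 0, and let g : ℝ^n × ℝ^m → ℝ^m be Lipschitz in y with constant L_g, with K L_g < β. Then for each fixed ξ ∈ ℝ^n and each continuous bounded forcing η : ℝ → ℝ^m, the integral equation Y_0(τ) = ∫_{-∞}^τ e^{B(τ-s)} g(ξ, Y_0(s) + η(s)) ds has a unique bounded continuous solution Y_0 : ℝ → ℝ^m. -/

import Mathlib

/-!
With `G = g(ξ, ·)` and `t = τ - s`, the right-hand side becomes `P (G ∘ (Y + η))`, where
`(P h)(τ) = ∫_{t>0} e^{Bt} h(τ - t) dt` is a bounded linear operator on bounded continuous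
functions of norm at most `K ∫_{t>0} e^{-βt} dt = K / β`, and `u ↦ G ∘ (u + η)` is
`L_g`-Lipschitz for the sup norm. Their composite is therefore a contraction with constant
`K L_g / β < 1`, whose unique fixed point (Banach) is the unique bounded continuous solution.
-/

open Real Set MeasureTheory BoundedContinuousFunction
open scoped NNReal

theorem integral_comp_sub_left_Ioi_zero {E : Type*} [NormedAddCommGroup E] [NormedSpace ℝ E]
    (F : ℝ → E) (τ : ℝ) : ∫ t in Ioi 0, F (τ - t) = ∫ s in Iic τ, F s := by
  have h := integral_comp_neg_Ioi 0 (fun x => F (τ + x))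
  simp only [neg_zero, ← sub_eq_add_neg] at h
  rw [h, ← (measurePreserving_add_left volume τ).setIntegral_preimage_emb
    (measurableEmbedding_addLeft τ) F (Iic τ), preimage_const_add_Iic, sub_self]

theorem integral_exp_neg_mul_Ioi_zero {β : ℝ} (hβ : 0 < β) :
    ∫ t in Ioi (0 : ℝ), exp (-β * t) = 1 / β := by
  rw [integral_exp_mul_Ioi (neg_lt_zero.2 hβ), mul_zero, exp_zero, neg_div_neg_eq]

structure IsExpStable {E : Type*} [NormedAddCommGroup E] [NormedSpace ℝ E]
    (Φ : ℝ → E →ₗ[ℝ] E) (K β : ℝ) : Prop where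
  continuous : Continuous fun p : ℝ × E => Φ p.1 p.2
  norm_le : ∀ t, 0 ≤ t → ∀ y, ‖Φ t y‖ ≤ K * exp (-β * t) * ‖y‖
  nonneg : 0 ≤ K
  pos : 0 < β

noncomputable def perronIntegral {E : Type*} [NormedAddCommGroup E] [NormedSpace ℝ E]
    (Φ : ℝ → E →ₗ[ℝ] E) (h : ℝ → E) (τ : ℝ) : E :=
  ∫ t in Ioi 0, Φ t (h (τ - t))

theorem perronIntegral_eq_integral_Iic {E : Type*} [NormedAddCommGroup E] [NormedSpace ℝ E]
    (Φ : ℝ → E →ₗ[ℝ] E) (h : ℝ → E) (τ : ℝ) :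
    perronIntegral Φ h τ = ∫ s in Iic τ, Φ (τ - s) (h s) := by
  rw [← integral_comp_sub_left_Ioi_zero]
  simp only [sub_sub_cancel, perronIntegral]

namespace IsExpStable

variable {E : Type*} [NormedAddCommGroup E] [NormedSpace ℝ E] {Φ : ℝ → E →ₗ[ℝ] E} {K β : ℝ}
  {h : ℝ → E} {M : ℝ}

theorem continuous_integrand (hΦ : IsExpStable Φ K β) (hc : Continuous h) (τ : ℝ) :
    Continuous fun t => Φ t (h (τ - t)) :=
  hΦ.continuous.comp (continuous_id.prodMk (hc.comp (continuous_const.sub continuous_id)))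

theorem ae_norm_integrand_le (hΦ : IsExpStable Φ K β) (hM : ∀ s, ‖h s‖ ≤ M) (τ : ℝ) :
    ∀ᵐ t ∂volume.restrict (Ioi 0), ‖Φ t (h (τ - t))‖ ≤ K * M * exp (-β * t) := by
  refine (ae_restrict_iff' measurableSet_Ioi).2 (ae_of_all _ fun t ht => ?_)
  have := hΦ.nonneg
  calc ‖Φ t (h (τ - t))‖ ≤ K * exp (-β * t) * ‖h (τ - t)‖ := hΦ.norm_le t ht.le _
    _ ≤ K * exp (-β * t) * M := by gcongr; exact hM _
    _ = K * M * exp (-β * t) := by ring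

theorem integrableOn_integrand (hΦ : IsExpStable Φ K β) (hc : Continuous h)
    (hM : ∀ s, ‖h s‖ ≤ M) (τ : ℝ) :
    IntegrableOn (fun t => Φ t (h (τ - t))) (Ioi 0) :=
  ((exp_neg_integrableOn_Ioi 0 hΦ.pos).const_mul (K * M)).mono'
    (hΦ.continuous_integrand hc τ).aestronglyMeasurable (hΦ.ae_norm_integrand_le hM τ)

theorem norm_perronIntegral_le (hΦ : IsExpStable Φ K β) (hM : ∀ s, ‖h s‖ ≤ M) (τ : ℝ) :
    ‖perronIntegral Φ h τ‖ ≤ K * M / β := by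
  calc ‖perronIntegral Φ h τ‖ ≤ ∫ t in Ioi 0, K * M * exp (-β * t) :=
        norm_integral_le_of_norm_le ((exp_neg_integrableOn_Ioi 0 hΦ.pos).const_mul (K * M))
          (hΦ.ae_norm_integrand_le hM τ)
    _ = K * M / β := by rw [integral_const_mul, integral_exp_neg_mul_Ioi_zero hΦ.pos]; ring

theorem continuous_perronIntegral (hΦ : IsExpStable Φ K β) (hc : Continuous h)
    (hM : ∀ s, ‖h s‖ ≤ M) :
    Continuous (perronIntegral Φ h) :=
  continuous_of_dominated (fun τ => (hΦ.continuous_integrand hc τ).aestronglyMeasurable)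
    (hΦ.ae_norm_integrand_le hM) ((exp_neg_integrableOn_Ioi 0 hΦ.pos).const_mul (K * M))
    (ae_of_all _ fun _ => hΦ.continuous.comp
      (continuous_const.prodMk (hc.comp (continuous_id.sub continuous_const))))

noncomputable def perronCLM (hΦ : IsExpStable Φ K β) : (ℝ →ᵇ E) →L[ℝ] (ℝ →ᵇ E) :=
  LinearMap.mkContinuous
    { toFun := fun h => BoundedContinuousFunction.ofNormedAddCommGroup (perronIntegral Φ h)
        (hΦ.continuous_perronIntegral h.continuous h.norm_coe_le_norm) (K * ‖h‖ / β)
        (hΦ.norm_perronIntegral_le h.norm_coe_le_norm)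
      map_add' := fun f g => by
        ext τ
        simp only [BoundedContinuousFunction.coe_ofNormedAddCommGroup, perronIntegral,
          BoundedContinuousFunction.coe_add, Pi.add_apply, map_add]
        exact integral_add (hΦ.integrableOn_integrand f.continuous f.norm_coe_le_norm τ)
          (hΦ.integrableOn_integrand g.continuous g.norm_coe_le_norm τ)
      map_smul' := fun c f => by
        ext τ
        simp only [BoundedContinuousFunction.coe_ofNormedAddCommGroup, perronIntegral,
          BoundedContinuousFunction.coe_smul, map_smul, RingHom.id_apply]
        exact integral_smul c _ }
    (K / β) fun h => by
      rw [BoundedContinuousFunction.norm_le (by have := hΦ.nonneg; have := hΦ.pos; positivity)]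
      intro τ
      rw [← mul_div_right_comm]
      exact hΦ.norm_perronIntegral_le h.norm_coe_le_norm τ

theorem perronCLM_apply (hΦ : IsExpStable Φ K β) (h : ℝ →ᵇ E) (τ : ℝ) :
    hΦ.perronCLM h τ = perronIntegral Φ h τ :=
  rfl

theorem norm_perronCLM_le (hΦ : IsExpStable Φ K β) : ‖hΦ.perronCLM‖ ≤ K / β :=
  LinearMap.mkContinuous_norm_le _ (div_nonneg hΦ.nonneg hΦ.pos.le) _

noncomputable def lyapunovPerronMap (hΦ : IsExpStable Φ K β) {G : E → E} {L : ℝ≥0}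
    (hG : LipschitzWith L G) (η : ℝ →ᵇ E) (u : ℝ →ᵇ E) : ℝ →ᵇ E :=
  hΦ.perronCLM ((u + η).comp G hG)

theorem contractingWith_lyapunovPerronMap (hΦ : IsExpStable Φ K β) {G : E → E} {L : ℝ≥0}
    (hG : LipschitzWith L G) (η : ℝ →ᵇ E) (hgap : K * L < β) :
    ContractingWith (‖hΦ.perronCLM‖₊ * L) (hΦ.lyapunovPerronMap hG η) := by
  refine ⟨?_, ?_⟩
  · rw [← NNReal.coe_lt_coe, NNReal.coe_mul, coe_nnnorm, NNReal.coe_one]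
    calc ‖hΦ.perronCLM‖ * L ≤ K / β * L := by gcongr; exact hΦ.norm_perronCLM_le
      _ < 1 := by rw [div_mul_eq_mul_div, div_lt_one hΦ.pos]; exact hgap
  · have h := hΦ.perronCLM.lipschitz.comp
      ((lipschitz_comp hG).comp (IsometryEquiv.addRight η).isometry.lipschitz)
    rwa [mul_one] at h

theorem isFixedPt_lyapunovPerronMap_iff (hΦ : IsExpStable Φ K β) {G : E → E} {L : ℝ≥0}
    (hG : LipschitzWith L G) (η u : ℝ →ᵇ E) :
    Function.IsFixedPt (hΦ.lyapunovPerronMap hG η) u ↔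
      ∀ τ, u τ = ∫ s in Iic τ, Φ (τ - s) (G (u s + η s)) := by
  simp only [Function.IsFixedPt, BoundedContinuousFunction.ext_iff, eq_comm (b := u _)]
  exact forall_congr' fun τ => by
    rw [lyapunovPerronMap, perronCLM_apply, perronIntegral_eq_integral_Iic]; rfl

theorem existsUnique_bounded_solution [CompleteSpace E] (hΦ : IsExpStable Φ K β) {G : E → E}
    {L : ℝ≥0} (hG : LipschitzWith L G) (hgap : K * L < β) {η : ℝ → E} (hηc : Continuous η)
    (hηb : ∃ C, ∀ s, ‖η s‖ ≤ C) :
    ∃! Y : ℝ → E, (Continuous Y ∧ ∃ C, ∀ τ, ‖Y τ‖ ≤ C) ∧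
      ∀ τ, Y τ = ∫ s in Iic τ, Φ (τ - s) (G (Y s + η s)) := by
  obtain ⟨C, hC⟩ := hηb
  have hT := hΦ.contractingWith_lyapunovPerronMap hG (.ofNormedAddCommGroup η hηc C hC) hgap
  refine ⟨⇑(ContractingWith.fixedPoint _ hT), ⟨⟨BoundedContinuousFunction.continuous _, _,
    norm_coe_le_norm _⟩, (hΦ.isFixedPt_lyapunovPerronMap_iff hG _ _).1 hT.fixedPoint_isFixedPt⟩,
    ?_⟩
  rintro Y ⟨⟨hYc, CY, hCY⟩, hY⟩
  let Y' : ℝ →ᵇ E := .ofNormedAddCommGroup Y hYc CY hCY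
  have hYfix := hT.fixedPoint_unique ((hΦ.isFixedPt_lyapunovPerronMap_iff hG _ Y').2 hY)
  exact congrArg DFunLike.coe hYfix

end IsExpStable

section

-- Any algebra norm on matrices will do: it only serves to make `NormedSpace.exp` continuous.
attribute [local instance] Matrix.linftyOpNormedRing Matrix.linftyOpNormedAlgebra

theorem Matrix.isExpStable_mulVecLin_exp_smul {m : ℕ} {B : Matrix (Fin m) (Fin m) ℝ} {K β : ℝ}
    (hK : 0 ≤ K) (hβ : 0 < β) (hB : ∀ t : ℝ, 0 ≤ t → ∀ y : Fin m → ℝ,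
      ‖(NormedSpace.exp (t • B)).mulVec y‖ ≤ K * Real.exp (-β * t) * ‖y‖) :
    IsExpStable (fun t => Matrix.mulVecLin (NormedSpace.exp (t • B))) K β where
  continuous :=
    (NormedSpace.exp_continuous.comp (continuous_fst.smul continuous_const)).matrix_mulVec
      continuous_snd
  norm_le := hB
  nonneg := hK
  pos := hβ

end

theorem zeroth_order_fixed_point_general (n m : ℕ) (B : Matrix (Fin m) (Fin m) ℝ)
    (K β Lg : ℝ) (hK : 0 < K) (hβ : 0 < β) (hLg : 0 ≤ Lg) (hgap : K * Lg < β)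
    (hB : ∀ t : ℝ, 0 ≤ t → ∀ y : Fin m → ℝ,
      ‖(NormedSpace.exp (t • B)).mulVec y‖ ≤ K * Real.exp (-β * t) * ‖y‖)
    (g : (Fin n → ℝ) → (Fin m → ℝ) → (Fin m → ℝ))
    (hglip : ∀ x : Fin n → ℝ, ∀ y y' : Fin m → ℝ, ‖g x y - g x y'‖ ≤ Lg * ‖y - y'‖)
    (ξ : Fin n → ℝ) (η : ℝ → Fin m → ℝ) (hηc : Continuous η)
    (hηb : ∃ C, ∀ s, ‖η s‖ ≤ C) :
    ∃! Y₀ : ℝ → Fin m → ℝ,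
      (Continuous Y₀ ∧ (∃ C, ∀ τ, ‖Y₀ τ‖ ≤ C)) ∧
      ∀ τ : ℝ, Y₀ τ =
        ∫ s in Iic τ, (NormedSpace.exp ((τ - s) • B)).mulVec (g ξ (Y₀ s + η s)) := by
  have hg : LipschitzWith ⟨Lg, hLg⟩ (g ξ) :=
    .of_dist_le_mul fun y y' => by rw [dist_eq_norm, dist_eq_norm]; exact hglip ξ y y'
  exact (Matrix.isExpStable_mulVecLin_exp_smul hK.le hβ hB).existsUnique_bounded_solution hg hgap
    hηc hηb

/-- Under the exponential decay bound for `e^{Bt}` and the gap condition `K L_g < β`, the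
Lyapunov–Perron integral equation for the zeroth-order fast variable has a unique bounded
continuous solution on the whole line. -/
theorem zeroth_order_fixed_point (n m : ℕ) (B : Matrix (Fin m) (Fin m) ℝ)
    (K β Lg : ℝ) (hK : 0 < K) (hβ : 0 < β) (hLg : 0 ≤ Lg) (hgap : K * Lg < β)
    (hB : ∀ t : ℝ, 0 ≤ t → ∀ y : Fin m → ℝ,
      ‖(NormedSpace.exp (t • B)).mulVec y‖ ≤ K * Real.exp (-β * t) * ‖y‖)
    (g : (Fin n → ℝ) → (Fin m → ℝ) → (Fin m → ℝ)) (hgcont : Continuous fun p : (Fin n → ℝ) × (Fin m → ℝ) => g p.1 p.2)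
    (hglip : ∀ x : Fin n → ℝ, ∀ y y' : Fin m → ℝ, ‖g x y - g x y'‖ ≤ Lg * ‖y - y'‖)
    (ξ : Fin n → ℝ) (η : ℝ → Fin m → ℝ) (hηc : Continuous η)
    (hηb : ∃ C, ∀ s, ‖η s‖ ≤ C) :
    ∃! Y₀ : ℝ → Fin m → ℝ,
      (Continuous Y₀ ∧ (∃ C, ∀ τ, ‖Y₀ τ‖ ≤ C)) ∧
      ∀ τ : ℝ, Y₀ τ =
        ∫ s in Iic τ, (NormedSpace.exp ((τ - s) • B)).mulVec (g ξ (Y₀ s + η s)) :=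
  zeroth_order_fixed_point_general n m B K β Lg hK hβ hLg hgap hB g hglip ξ η hηc hηb
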